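/- Fix y, s ∈ {0,1} and a ∈ 𝒜 with P(Y⁰=y, S=s) > 0, and assume: consistency (P-almost surely, if D = 0 then Y = Y⁰); Y⁰ is conditionally independent of (A, D) given (X, S), i.e. for all y', d ∈ {0,1}, a' ∈ 𝒜, and all x, s' with P(X=x, S=s') > 0, P(Y⁰=y', A=a', D=d | X=x, S=s') = P(Y⁰=y' | X=x, S=s') · P(A=a', D=d | X=x, S=s'); and positivity given (X,S), i.e. P(D=0, S=s', X=x) > 0 whenever P(S=s', X=x) > 0. Then the conditional group-membership probability is identified by observed-data regressions: P(A=a | Y⁰=y, S=s) = E[μ₀(y,s,X) · 1{A=a} · 1{S=s}] / E[μ₀(y,s,X) · 1{S=s}], where the denominator is strictly positive since it equals P(Y⁰=y, S=s). -/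

import Mathlib

open MeasureTheory

/-- `pr P E` is the probability of the event `E` as a real number. -/
noncomputable def pr {Ω : Type*} [MeasurableSpace Ω] (P : Measure Ω) (E : Set Ω) : ℝ :=
  (P E).toReal

/-- `cpr P E F = P(E | F) = P(E ∩ F) / P(F)`, the conditional probability of `E` given `F`. -/
noncomputable def cpr {Ω : Type*} [MeasurableSpace Ω] (P : Measure Ω) (E F : Set Ω) : ℝ :=
  pr P (E ∩ F) / pr P F

/-! In each stratum `F x = {X = x, S = s}`, summing the conditional independence of `Y⁰` and
`(A, D)` over `A` (resp. over `D`) makes `Y⁰` independent of `D` (resp. of `A`). Consistency and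
positivity turn `μ₀(y,s,x)` into `P(Y⁰ = y | D = 0, F x)`, which by the first independence is
`P(Y⁰ = y | F x)`; by the second, `μ₀(y,s,x) · P(A = a, F x) = P(Y⁰ = y, A = a, F x)`. The law of
total probability over `X` then turns numerator and denominator into `P(A = a, Y⁰ = y, S = s)` and
`P(Y⁰ = y, S = s)`. -/

section ConditionalProbability

variable {Ω : Type*} [MeasurableSpace Ω] (P : Measure Ω) [IsFiniteMeasure P] {E F G : Set Ω}

omit [IsFiniteMeasure P] in
lemma pr_nonneg (E : Set Ω) : 0 ≤ pr P E := ENNReal.toReal_nonneg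

lemma pr_mono (h : E ⊆ F) : pr P E ≤ pr P F :=
  ENNReal.toReal_mono (measure_ne_top _ _) (measure_mono h)

lemma pr_eq_zero_of_subset (hF : pr P F = 0) (h : E ⊆ F) : pr P E = 0 :=
  le_antisymm (hF ▸ pr_mono P h) (pr_nonneg P E)

-- For null `F` both sides vanish, `cpr P E F` being `0` by the convention `x / 0 = 0`.
lemma cpr_mul_pr (E F : Set Ω) : cpr P E F * pr P F = pr P (E ∩ F) := by
  rcases eq_or_ne (pr P F) 0 with hF | hF
  · rw [hF, mul_zero, pr_eq_zero_of_subset P hF Set.inter_subset_right]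
  · exact div_mul_cancel₀ _ hF

omit [IsFiniteMeasure P] in
lemma cpr_congr_ae {E' : Set Ω} (h : ∀ᵐ ω ∂P, ω ∈ F → (ω ∈ E ↔ ω ∈ E')) :
    cpr P E F = cpr P E' F := by
  have hEF : (E ∩ F : Set Ω) =ᵐ[P] (E' ∩ F : Set Ω) := by
    filter_upwards [h] with ω hω using propext (and_congr_left hω)
  simp only [cpr, pr, measure_congr hEF]

lemma cpr_inter_right_of_indep (hEG : cpr P (E ∩ G) F = cpr P E F * cpr P G F)
    (hGF : 0 < pr P (G ∩ F)) : cpr P E (G ∩ F) = cpr P E F := by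
  rw [cpr, ← Set.inter_assoc, ← cpr_mul_pr, ← cpr_mul_pr P G, hEG, mul_assoc,
    mul_div_cancel_right₀ _ (by rw [cpr_mul_pr]; exact hGF.ne')]

lemma mul_pr_inter_eq_of_indep {c : ℝ} (hc : 0 < pr P F → c = cpr P E F)
    (hEG : 0 < pr P F → cpr P (E ∩ G) F = cpr P E F * cpr P G F) :
    c * pr P (G ∩ F) = pr P (E ∩ G ∩ F) := by
  rcases (pr_nonneg P F).eq_or_lt with hF | hF
  · rw [pr_eq_zero_of_subset P hF.symm Set.inter_subset_right,
      pr_eq_zero_of_subset P hF.symm Set.inter_subset_right, mul_zero]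
  · rw [← cpr_mul_pr P G, ← mul_assoc, hc hF, ← hEG hF, cpr_mul_pr]

variable {ι : Type*} [Countable ι] [MeasurableSpace ι] [MeasurableSingletonClass ι] {f : Ω → ι}

lemma tsum_pr_inter_fiber (hf : Measurable f) (hE : MeasurableSet E) :
    ∑' i, pr P (E ∩ f ⁻¹' {i}) = pr P E := by
  have hdisj : Pairwise (Function.onFun Disjoint fun i => E ∩ f ⁻¹' {i}) := fun i j hij =>
    ((Set.disjoint_singleton.2 hij).preimage f).mono Set.inter_subset_right Set.inter_subset_right
  have hmeas i : MeasurableSet (E ∩ f ⁻¹' {i}) := hE.inter (hf (measurableSet_singleton i))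
  simp only [pr]
  rw [← ENNReal.tsum_toReal_eq fun _ => measure_ne_top _ _, ← measure_iUnion hdisj hmeas,
    ← Set.inter_iUnion, ← Set.preimage_iUnion, Set.iUnion_of_singleton, Set.preimage_univ,
    Set.inter_univ]

lemma tsum_cpr_inter_fiber (hf : Measurable f) (hE : MeasurableSet E) (hF : MeasurableSet F) :
    ∑' i, cpr P (E ∩ f ⁻¹' {i}) F = cpr P E F := by
  simp only [cpr, Set.inter_right_comm _ (f ⁻¹' _)]
  rw [tsum_div_const, tsum_pr_inter_fiber P hf (hE.inter hF)]

lemma tsum_mul_pr_inter_fiber_eq (hf : Measurable f) (hE : MeasurableSet E)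
    (hG : MeasurableSet G) {T : Set Ω} (hT : MeasurableSet T) {c : ι → ℝ}
    (hc : ∀ i, 0 < pr P (f ⁻¹' {i} ∩ T) → c i = cpr P E (f ⁻¹' {i} ∩ T))
    (hEG : ∀ i, 0 < pr P (f ⁻¹' {i} ∩ T) → cpr P (E ∩ G) (f ⁻¹' {i} ∩ T) =
      cpr P E (f ⁻¹' {i} ∩ T) * cpr P G (f ⁻¹' {i} ∩ T)) :
    ∑' i, c i * pr P (G ∩ (f ⁻¹' {i} ∩ T)) = pr P (E ∩ G ∩ T) := by
  rw [← tsum_pr_inter_fiber P hf ((hE.inter hG).inter hT)]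
  refine tsum_congr fun i => ?_
  rw [mul_pr_inter_eq_of_indep P (hc i) (hEG i), Set.inter_comm (f ⁻¹' {i}), ← Set.inter_assoc]

lemma cpr_inter_eq_mul_of_forall_fiber (hf : Measurable f) (hE : MeasurableSet E)
    (hG : MeasurableSet G) (hF : MeasurableSet F)
    (h : ∀ i, cpr P (E ∩ (G ∩ f ⁻¹' {i})) F = cpr P E F * cpr P (G ∩ f ⁻¹' {i}) F) :
    cpr P (E ∩ G) F = cpr P E F * cpr P G F := by
  rw [← tsum_cpr_inter_fiber P hf (hE.inter hG) hF, ← tsum_cpr_inter_fiber P hf hG hF,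
    ← tsum_mul_left]
  simp_rw [Set.inter_assoc]
  exact tsum_congr h

end ConditionalProbability

section PotentialOutcomes

variable {Ω : Type*} [MeasurableSpace Ω] {P : Measure Ω} [IsFiniteMeasure P] {Y0 Y D : Ω → Bool}
  {F : Set Ω} {y : Bool}

lemma cpr_potential_inter_treatment_eq_mul {𝒜 : Type*} [MeasurableSpace 𝒜]
    [MeasurableSingletonClass 𝒜] [Countable 𝒜] {A : Ω → 𝒜} (hY0 : Measurable Y0)
    (hD : Measurable D) (hA : Measurable A) (hF : MeasurableSet F) {d : Bool}
    (hCI : ∀ a', cpr P {ω | Y0 ω = y ∧ A ω = a' ∧ D ω = d} F =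
      cpr P {ω | Y0 ω = y} F * cpr P {ω | A ω = a' ∧ D ω = d} F) :
    cpr P ({ω | Y0 ω = y} ∩ {ω | D ω = d}) F =
      cpr P {ω | Y0 ω = y} F * cpr P {ω | D ω = d} F :=
  cpr_inter_eq_mul_of_forall_fiber P hA (hY0 (measurableSet_singleton y))
    (hD (measurableSet_singleton d)) hF fun a' => by
      convert hCI a' using 3 <;> ext <;> simp [and_comm]

lemma cpr_outcome_untreated_eq_cpr_potential (hcons : ∀ᵐ ω ∂P, D ω = false → Y ω = Y0 ω)
    (hindep : cpr P ({ω | Y0 ω = y} ∩ {ω | D ω = false}) F =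
      cpr P {ω | Y0 ω = y} F * cpr P {ω | D ω = false} F)
    (hpos : 0 < pr P ({ω | D ω = false} ∩ F)) :
    cpr P {ω | Y ω = y} ({ω | D ω = false} ∩ F) = cpr P {ω | Y0 ω = y} F := by
  rw [cpr_congr_ae P (E' := {ω | Y0 ω = y}), cpr_inter_right_of_indep P hindep hpos]
  filter_upwards [hcons] with ω hω hωF
  simp [hω hωF.1]

end PotentialOutcomes

theorem stmt_7_general
    {Ω 𝒜 𝒳 : Type*} [MeasurableSpace Ω]
    [MeasurableSpace 𝒜] [MeasurableSingletonClass 𝒜] [Countable 𝒜]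
    [MeasurableSpace 𝒳] [MeasurableSingletonClass 𝒳] [Countable 𝒳]
    (P : Measure Ω) [IsProbabilityMeasure P]
    (Y0 Y D S : Ω → Bool) (A : Ω → 𝒜) (X : Ω → 𝒳)
    (hY0 : Measurable Y0) (hD : Measurable D) (hS : Measurable S)
    (hA : Measurable A) (hX : Measurable X)
    (y s : Bool) (a : 𝒜)
    (hpos : 0 < pr P {ω | Y0 ω = y ∧ S ω = s})
    (hcons : ∀ᵐ ω ∂P, D ω = false → Y ω = Y0 ω)
    (hCI : ∀ (y' d : Bool) (a' : 𝒜) (x : 𝒳) (s' : Bool),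
      0 < pr P {ω | X ω = x ∧ S ω = s'} →
      cpr P {ω | Y0 ω = y' ∧ A ω = a' ∧ D ω = d} {ω | X ω = x ∧ S ω = s'} =
        cpr P {ω | Y0 ω = y'} {ω | X ω = x ∧ S ω = s'} *
          cpr P {ω | A ω = a' ∧ D ω = d} {ω | X ω = x ∧ S ω = s'})
    (hposD : ∀ (s' : Bool) (x : 𝒳), 0 < pr P {ω | S ω = s' ∧ X ω = x} →
      0 < pr P {ω | D ω = false ∧ S ω = s' ∧ X ω = x}) :
    0 < (∑' x : 𝒳,
          cpr P {ω | Y ω = y} {ω | D ω = false ∧ S ω = s ∧ X ω = x} *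
            pr P {ω | S ω = s ∧ X ω = x}) ∧
    (∑' x : 𝒳,
        cpr P {ω | Y ω = y} {ω | D ω = false ∧ S ω = s ∧ X ω = x} *
          pr P {ω | S ω = s ∧ X ω = x}) = pr P {ω | Y0 ω = y ∧ S ω = s} ∧
    cpr P {ω | A ω = a} {ω | Y0 ω = y ∧ S ω = s} =
      (∑' x : 𝒳,
          cpr P {ω | Y ω = y} {ω | D ω = false ∧ S ω = s ∧ X ω = x} *
            pr P {ω | A ω = a ∧ S ω = s ∧ X ω = x}) /
        (∑' x : 𝒳,
            cpr P {ω | Y ω = y} {ω | D ω = false ∧ S ω = s ∧ X ω = x} *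
              pr P {ω | S ω = s ∧ X ω = x}) := by
  set μ₀ : 𝒳 → ℝ := fun x => cpr P {ω | Y ω = y} {ω | D ω = false ∧ S ω = s ∧ X ω = x}
  set F : 𝒳 → Set Ω := fun x => X ⁻¹' {x} ∩ {ω | S ω = s}
  have hY0y : MeasurableSet {ω | Y0 ω = y} := hY0 (measurableSet_singleton y)
  have hAa : MeasurableSet {ω | A ω = a} := hA (measurableSet_singleton a)
  have hSs : MeasurableSet {ω | S ω = s} := hS (measurableSet_singleton s)
  have hF x : MeasurableSet (F x) := (hX (measurableSet_singleton x)).inter hSs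
  have hSX x : {ω | S ω = s ∧ X ω = x} = F x := Set.ext fun _ => and_comm
  have hDSX x : {ω | D ω = false ∧ S ω = s ∧ X ω = x} = {ω | D ω = false} ∩ F x :=
    Set.ext fun _ => by simp [F, and_comm]
  have hindepA x (hx : 0 < pr P (F x)) :
      cpr P ({ω | Y0 ω = y} ∩ {ω | A ω = a}) (F x) =
        cpr P {ω | Y0 ω = y} (F x) * cpr P {ω | A ω = a} (F x) :=
    cpr_inter_eq_mul_of_forall_fiber P hD hY0y hAa (hF x) fun d => hCI y d a x s hx
  have hμ x (hx : 0 < pr P (F x)) : μ₀ x = cpr P {ω | Y0 ω = y} (F x) := by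
    simp only [μ₀, hDSX]
    refine cpr_outcome_untreated_eq_cpr_potential hcons
      (cpr_potential_inter_treatment_eq_mul hY0 hD hA (hF x) fun a' => hCI y false a' x s hx) ?_
    rw [← hDSX]
    exact hposD s x (hSX x ▸ hx)
  have hden : ∑' x, μ₀ x * pr P {ω | S ω = s ∧ X ω = x} = pr P {ω | Y0 ω = y ∧ S ω = s} := by
    have h := tsum_mul_pr_inter_fiber_eq P hX hY0y MeasurableSet.univ hSs hμ
      fun x hx => by rw [Set.inter_univ, cpr, cpr, Set.univ_inter, div_self hx.ne', mul_one]
    simp only [Set.univ_inter, Set.inter_univ] at h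
    simp_rw [hSX]
    exact h
  have hnum : ∑' x, μ₀ x * pr P {ω | A ω = a ∧ S ω = s ∧ X ω = x} =
      pr P ({ω | A ω = a} ∩ {ω | Y0 ω = y ∧ S ω = s}) := by
    have h := tsum_mul_pr_inter_fiber_eq P hX hY0y hAa hSs hμ hindepA
    rw [Set.inter_comm {ω | Y0 ω = y}, Set.inter_assoc] at h
    convert h using 5 with x <;> ext <;> simp [and_comm]
  exact ⟨hden ▸ hpos, hden, by rw [hnum, hden, cpr]⟩

/-- under consistency, conditional independence of `Y⁰` and `(A, D)` given `(X, S)`,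
and positivity given `(X, S)`, the conditional group-membership probability is identified:
`P(A=a | Y⁰=y, S=s) = E[μ₀(y,s,X)·1{A=a}·1{S=s}] / E[μ₀(y,s,X)·1{S=s}]`,
where `μ₀(y,s,x) = P(Y=y | D=0, S=s, X=x)` and the denominator is strictly positive since it
equals `P(Y⁰=y, S=s)`.
Binary variables are modelled as `Bool`-valued, with `1 = true` and `0 = false`. -/
theorem stmt_7
    {Ω 𝒜 𝒳 : Type*} [MeasurableSpace Ω]
    [MeasurableSpace 𝒜] [MeasurableSingletonClass 𝒜] [Countable 𝒜] [Nonempty 𝒜]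
    [MeasurableSpace 𝒳] [MeasurableSingletonClass 𝒳] [Countable 𝒳] [Nonempty 𝒳]
    (P : Measure Ω) [IsProbabilityMeasure P]
    (Y0 Y D S : Ω → Bool) (A : Ω → 𝒜) (X : Ω → 𝒳)
    (hY0 : Measurable Y0) (hY : Measurable Y) (hD : Measurable D) (hS : Measurable S)
    (hA : Measurable A) (hX : Measurable X)
    (y s : Bool) (a : 𝒜)
    (hpos : 0 < pr P {ω | Y0 ω = y ∧ S ω = s})
    (hcons : ∀ᵐ ω ∂P, D ω = false → Y ω = Y0 ω)
    (hCI : ∀ (y' d : Bool) (a' : 𝒜) (x : 𝒳) (s' : Bool),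
      0 < pr P {ω | X ω = x ∧ S ω = s'} →
      cpr P {ω | Y0 ω = y' ∧ A ω = a' ∧ D ω = d} {ω | X ω = x ∧ S ω = s'} =
        cpr P {ω | Y0 ω = y'} {ω | X ω = x ∧ S ω = s'} *
          cpr P {ω | A ω = a' ∧ D ω = d} {ω | X ω = x ∧ S ω = s'})
    (hposD : ∀ (s' : Bool) (x : 𝒳), 0 < pr P {ω | S ω = s' ∧ X ω = x} →
      0 < pr P {ω | D ω = false ∧ S ω = s' ∧ X ω = x}) :
    0 < (∑' x : 𝒳,
          cpr P {ω | Y ω = y} {ω | D ω = false ∧ S ω = s ∧ X ω = x} *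
            pr P {ω | S ω = s ∧ X ω = x}) ∧
    (∑' x : 𝒳,
        cpr P {ω | Y ω = y} {ω | D ω = false ∧ S ω = s ∧ X ω = x} *
          pr P {ω | S ω = s ∧ X ω = x}) = pr P {ω | Y0 ω = y ∧ S ω = s} ∧
    cpr P {ω | A ω = a} {ω | Y0 ω = y ∧ S ω = s} =
      (∑' x : 𝒳,
          cpr P {ω | Y ω = y} {ω | D ω = false ∧ S ω = s ∧ X ω = x} *
            pr P {ω | A ω = a ∧ S ω = s ∧ X ω = x}) /
        (∑' x : 𝒳,
            cpr P {ω | Y ω = y} {ω | D ω = false ∧ S ω = s ∧ X ω = x} *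
              pr P {ω | S ω = s ∧ X ω = x}) :=
  stmt_7_general P Y0 Y D S A X hY0 hD hS hA hX y s a hpos hcons hCI hposD
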